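/- arXiv:1203.2123 — 9 statements merged into one kernel-verified Lean document; each statement's English description precedes it below -/
import Mathlib

section
/- Let (G,·) be a group, θ ∈ Aut(G) with θ^{n-1} = id. Then the Post cover G*_e of der_θ(G,·) (the set ℤ_{n-1} × G with operation (i,x) ∗ (j,y) = (i+j+1, x·θ^{i+1}(y))) is a group isomorphic to the semidirect product ℤ_{n-1} ⋉ G, where i ∈ ℤ_{n-1} acts on G by i·x = θ^i(x); the isomorphism is given by φ(i,x) = (i-1, θ^{n-2}(x)). -/
/-- Multiplication of the semidirect product `ℤ_{n-1} ⋉ G`, where `i` acts by `θ^i`. -/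
def sdMul {G : Type*} [Group G] (n : ℕ) (θ : MulAut G) (p q : ZMod (n - 1) × G) :
    ZMod (n - 1) × G :=
  (p.1 + q.1, p.2 * (θ ^ p.1.val) q.2)

/-- Multiplication of the Post cover `G*_e` of `der_θ(G,·)`. -/
def postMul {G : Type*} [Group G] (n : ℕ) (θ : MulAut G) (p q : ZMod (n - 1) × G) :
    ZMod (n - 1) × G :=
  (p.1 + q.1 + 1, p.2 * (θ ^ (p.1.val + 1)) q.2)

/-- The Post cover `G*_e` of `der_θ(G,·)` (with `θ^{n-1} = id`) is a group isomorphic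
to the semidirect product `ℤ_{n-1} ⋉ G`, the isomorphism being
`φ(i,x) = (i-1, θ^{n-2}(x))`: this map is a bijection intertwining the semidirect
product multiplication with the Post cover multiplication. -/
theorem postCover_iso_semidirect {G : Type*} [Group G] (n : ℕ) (hn : 2 ≤ n)
    (θ : MulAut G) (hθ : θ ^ (n - 1) = 1) :
    Function.Bijective
        (fun p : ZMod (n - 1) × G => (p.1 - 1, (θ ^ (n - 2)) p.2)) ∧
      ∀ p q : ZMod (n - 1) × G,
        (fun p : ZMod (n - 1) × G => (p.1 - 1, (θ ^ (n - 2)) p.2)) (sdMul n θ p q) =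
          postMul n θ ((fun p : ZMod (n - 1) × G => (p.1 - 1, (θ ^ (n - 2)) p.2)) p)
            ((fun p : ZMod (n - 1) × G => (p.1 - 1, (θ ^ (n - 2)) p.2)) q) := by
  have hm : n - 2 + 1 = n - 1 := by omega
  have hone : θ ^ (n - 2) * θ = 1 := by
    rw [← pow_succ, hm, hθ]
  have hone' : θ * θ ^ (n - 2) = 1 := by
    rw [← pow_succ', hm, hθ]
  have hNZ : NeZero (n - 1) := ⟨by omega⟩
  have hpow : ∀ a b : ℕ, (a : ZMod (n - 1)) = (b : ZMod (n - 1)) → θ ^ a = θ ^ b := by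
    intro a b h
    rw [ZMod.natCast_eq_natCast_iff] at h
    rw [pow_eq_pow_mod a hθ, pow_eq_pow_mod b hθ, h]
  constructor
  · apply Function.bijective_iff_has_inverse.2
    refine ⟨fun q => (q.1 + 1, θ q.2), ?_, ?_⟩
    · intro p
      simp only
      ext
      · simp
      · show (θ * θ ^ (n - 2)) p.2 = p.2
        rw [hone']; rfl
    · intro p
      simp only
      ext
      · simp
      · show (θ ^ (n - 2) * θ) p.2 = p.2
        rw [hone]; rfl
  · intro p q
    simp only [sdMul, postMul]
    refine Prod.ext ?_ ?_
    · show p.1 + q.1 - 1 = p.1 - 1 + (q.1 - 1) + 1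
      ring
    · show (θ ^ (n - 2)) (p.2 * (θ ^ p.1.val) q.2)
        = (θ ^ (n - 2)) p.2 * (θ ^ ((p.1 - 1).val + 1)) ((θ ^ (n - 2)) q.2)
      rw [map_mul]
      congr 1
      have : (θ ^ ((p.1 - 1).val + 1)) ((θ ^ (n - 2)) q.2)
          = (θ ^ ((p.1 - 1).val + 1) * θ ^ (n - 2)) q.2 := rfl
      rw [this, ← pow_add]
      have h2 : (θ ^ (n - 2)) ((θ ^ p.1.val) q.2) = (θ ^ (n - 2 + p.1.val)) q.2 := by
        rw [pow_add]; rfl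
      rw [h2]
      congr 1
      apply hpow
      push_cast
      rw [ZMod.natCast_val, ZMod.natCast_val, ZMod.cast_id, ZMod.cast_id]
      ring
end

section
/- Let (G,f) = der_θ(G,·) with θ^{n-1} = id, Λ ∈ Aut(G,f), and u = Λ(e). Then the map Λ*_e : G*_e → G*_u defined by Λ*_e(i,x) = (i, Λ(x)) is a group isomorphism between the Post covers based at e and at u. -/
/-!
Because `Λ` commutes with `f` and `u = Λ(e)`, applying `Λ` to `f(x, e, …, e, y, e, …, e)` gives
`Λ(x θ^k(y)) = Λ(x) θ(u)⋯θ^{k-1}(u) θ^k(Λ y) θ^{k+1}(u)⋯θ^{n-1}(u)`. For `x = y = e` this says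
`θ(u)⋯θ^{n-1}(u) = e`, which forces `ū = u` and makes runs of consecutive twisted copies of `u`
periodic of period `n - 1`. The product of `(i, Λ x)` and `(j, Λ y)` in `G*_u` is then exactly the
right-hand side above with `k = i + 1`.
-/

/-- The `n`-ary operation of `der_θ(G,·)`. -/
def derF {G : Type*} [Group G] (n : ℕ) (θ : MulAut G) (x : Fin n → G) : G :=
  (List.ofFn fun i : Fin n => (θ ^ (i : ℕ)) (x i)).prod

/-- Iterated application of `f` (i.e. `f_*`) to a list whose length is `≡ 1 mod (n-1)`:
for `der_θ(G,·)` this is the product `∏ θ^{t mod (n-1)}(L_t)`. -/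
def longProd {G : Type*} [Group G] (n : ℕ) (θ : MulAut G) (L : List G) : G :=
  (L.zipIdx.map fun p => (θ ^ (p.2 % (n - 1))) p.1).prod

/-- Multiplication of the Post cover `G*_a` based at `a`, with skew element `abar`:
`(i,x) ∗ (j,y) = (i+j+1, f_*(x, a^{(i)}, y, a^{(j)}, ā, a^{(n-i-j-3 mod n-1)}))`. -/
def postOpA {G : Type*} [Group G] (n : ℕ) (θ : MulAut G) (a abar : G)
    (p q : ZMod (n - 1) × G) : ZMod (n - 1) × G :=
  (p.1 + q.1 + 1,
    longProd n θ
      ([p.2] ++ List.replicate p.1.val a ++ [q.2] ++ List.replicate q.1.val a ++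
        [abar] ++
        List.replicate ((((n : ℤ) - p.1.val - q.1.val - 3) % ((n : ℤ) - 1)).toNat) a))

namespace PostCover

variable {G : Type*} [Group G]

def twistedProd (θ : MulAut G) : ℕ → List G → G
  | _, [] => 1
  | k, x :: L => (θ ^ k) x * twistedProd θ (k + 1) L

@[simp] lemma twistedProd_nil (θ : MulAut G) (k : ℕ) : twistedProd θ k [] = 1 := rfl

@[simp] lemma twistedProd_cons (θ : MulAut G) (k : ℕ) (x : G) (L : List G) :
    twistedProd θ k (x :: L) = (θ ^ k) x * twistedProd θ (k + 1) L := rfl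

lemma twistedProd_append (θ : MulAut G) (L₁ L₂ : List G) (k : ℕ) :
    twistedProd θ k (L₁ ++ L₂) = twistedProd θ k L₁ * twistedProd θ (k + L₁.length) L₂ := by
  induction L₁ generalizing k with
  | nil => simp
  | cons x L ih => simp [ih, mul_assoc, add_assoc, add_comm 1]

lemma twistedProd_add (θ : MulAut G) (d k : ℕ) (L : List G) :
    twistedProd θ (d + k) L = (θ ^ d) (twistedProd θ k L) := by
  induction L generalizing k with
  | nil => simp
  | cons x L ih => simp [pow_add, ← ih, add_assoc]

@[simp] lemma twistedProd_replicate_one (θ : MulAut G) (k m : ℕ) :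
    twistedProd θ k (List.replicate m (1 : G)) = 1 := by
  induction m generalizing k with
  | zero => rfl
  | succ m ih => simp [List.replicate_succ, ih]

lemma twistedProd_replicate_add_mul {θ : MulAut G} {a : G} {p : ℕ}
    (hper : ∀ k, twistedProd θ k (List.replicate p a) = 1) (k r q : ℕ) :
    twistedProd θ k (List.replicate (r + p * q) a) = twistedProd θ k (List.replicate r a) := by
  induction q with
  | zero => simp
  | succ q ih =>
    rw [Nat.mul_succ, ← add_assoc, List.replicate_add, twistedProd_append, ih, hper, mul_one]

lemma twistedProd_eq_one_of_period {θ : MulAut G} {a : G} {p : ℕ}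
    (h : twistedProd θ 1 (List.replicate p a) = 1) (k : ℕ) :
    twistedProd θ k (List.replicate p a) = 1 := by
  have h₁ := twistedProd_add θ 1 0 (List.replicate p a)
  rw [pow_one, h] at h₁
  have h₀ : twistedProd θ 0 (List.replicate p a) = 1 :=
    θ.injective (h₁.symm.trans (map_one θ).symm)
  simpa [h₀] using twistedProd_add θ k 0 (List.replicate p a)

lemma derF_eq_twistedProd (n : ℕ) (θ : MulAut G) (x : Fin n → G) :
    derF n θ x = twistedProd θ 0 (List.ofFn x) := by
  suffices ∀ k, (List.ofFn fun i : Fin n => (θ ^ (k + i : ℕ)) (x i)).prod =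
      twistedProd θ k (List.ofFn x) by simpa [derF] using this 0
  induction n with
  | zero => simp
  | succ n ih =>
    intro k
    simp [List.ofFn_succ, ← ih (fun i => x i.succ) (k + 1), add_assoc, add_comm 1]

lemma longProd_eq_twistedProd {n : ℕ} {θ : MulAut G} (hθ : θ ^ (n - 1) = 1) (L : List G) :
    longProd n θ L = twistedProd θ 0 L := by
  suffices ∀ k, ((L.zipIdx k).map fun p => (θ ^ (p.2 % (n - 1))) p.1).prod =
      twistedProd θ k L from this 0
  induction L with
  | nil => simp
  | cons x L ih =>
    intro k
    rw [List.zipIdx_cons, List.map_cons, List.prod_cons, ih, ← pow_eq_pow_mod k hθ,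
      twistedProd_cons]

lemma twistedProd_replicate_mod {θ : MulAut G} {a : G} {p : ℕ}
    (hper : ∀ k, twistedProd θ k (List.replicate p a) = 1) (k c : ℕ) :
    twistedProd θ k (List.replicate c a) = twistedProd θ k (List.replicate (c % p) a) := by
  conv_lhs => rw [← Nat.mod_add_div c p]
  exact twistedProd_replicate_add_mul hper k _ _

def IsDerEndo (n : ℕ) (θ : MulAut G) (Λ : G → G) : Prop :=
  ∀ x : Fin n → G, Λ (derF n θ x) = derF n θ (fun i => Λ (x i))

namespace IsDerEndo

variable {n : ℕ} {θ : MulAut G} {Λ : G → G}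

lemma map_twistedProd (hΛ : IsDerEndo n θ Λ) {L : List G} (hL : L.length = n) :
    Λ (twistedProd θ 0 L) = twistedProd θ 0 (L.map Λ) := by
  subst hL
  simpa [derF_eq_twistedProd, List.ofFn_getElem, List.ofFn_getElem_eq_map]
    using hΛ fun i => L[i]

lemma twistedProd_replicate_map_one (hΛ : IsDerEndo n θ Λ) (hn : 0 < n) :
    twistedProd θ 1 (List.replicate (n - 1) (Λ 1)) = 1 := by
  obtain ⟨m, rfl⟩ : ∃ m, n = m + 1 := ⟨n - 1, by omega⟩
  have h := hΛ.map_twistedProd (L := List.replicate (m + 1) 1) (by simp)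
  simp only [twistedProd_replicate_one, List.replicate_succ, twistedProd_cons,
    pow_zero, MulAut.one_apply, zero_add] at h
  simpa using h.symm

lemma map_mul_pow_succ_apply (hΛ : IsDerEndo n θ Λ) {k : ℕ} (hk : k + 2 ≤ n) (x y : G) :
    Λ (x * (θ ^ (k + 1)) y) = Λ x * twistedProd θ 1 (List.replicate k (Λ 1)) *
      (θ ^ (k + 1)) (Λ y) * twistedProd θ (k + 2) (List.replicate (n - 2 - k) (Λ 1)) := by
  have h := hΛ.map_twistedProd
    (L := x :: List.replicate k 1 ++ y :: List.replicate (n - 2 - k) 1) (by simp; omega)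
  simp only [twistedProd_append, twistedProd_cons, twistedProd_replicate_one, List.map_append,
    List.map_cons, List.map_replicate, List.length_cons, List.length_replicate, pow_zero,
    MulAut.one_apply, mul_one, zero_add] at h
  rw [h]
  simp only [mul_assoc]

end IsDerEndo

-- The number of `a`s following `y` in `postOpA`, reduced mod `n - 1`.
lemma add_one_add_toNat_emod_eq {n i j : ℕ} (hi : i + 2 ≤ n) :
    (j + 1 + (((n : ℤ) - i - j - 3) % ((n : ℤ) - 1)).toNat) % (n - 1) = n - 2 - i := by
  have hmod : j + 1 + (((n : ℤ) - i - j - 3) % ((n : ℤ) - 1)).toNat ≡ n - 2 - i [MOD n - 1] := by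
    rw [← Int.natCast_modEq_iff]
    have hr : 0 ≤ ((n : ℤ) - i - j - 3) % ((n : ℤ) - 1) := Int.emod_nonneg _ (by omega)
    push_cast [Int.toNat_of_nonneg hr, Nat.cast_sub (by omega : 1 ≤ n),
      Nat.cast_sub (by omega : 2 ≤ n), Nat.cast_sub (by omega : i ≤ n - 2)]
    calc (j : ℤ) + 1 + ((n : ℤ) - i - j - 3) % ((n : ℤ) - 1)
        ≡ j + 1 + ((n : ℤ) - i - j - 3) [ZMOD (n : ℤ) - 1] := (Int.mod_modEq _ _).add_left _
      _ = n - 2 - i := by ring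
  rw [hmod, Nat.mod_eq_of_lt (by omega)]

lemma val_add_two_le {n : ℕ} (hn : 2 ≤ n) (i : ZMod (n - 1)) : i.val + 2 ≤ n := by
  have : NeZero (n - 1) := ⟨by omega⟩
  have := i.val_lt
  omega

lemma postOpA_snd_self {n : ℕ} (hn : 2 ≤ n) {θ : MulAut G} (hθ : θ ^ (n - 1) = 1) {a : G}
    (hper : ∀ k, twistedProd θ k (List.replicate (n - 1) a) = 1) (p q : ZMod (n - 1) × G) :
    (postOpA n θ a a p q).2 = p.2 * twistedProd θ 1 (List.replicate p.1.val a) *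
      (θ ^ (p.1.val + 1)) q.2 *
        twistedProd θ (p.1.val + 2) (List.replicate (n - 2 - p.1.val) a) := by
  have hi := val_add_two_le hn p.1
  set m := (((n : ℤ) - p.1.val - q.1.val - 3) % ((n : ℤ) - 1)).toNat
  have hlist : [p.2] ++ List.replicate p.1.val a ++ [q.2] ++ List.replicate q.1.val a ++ [a] ++
      List.replicate m a =
        p.2 :: (List.replicate p.1.val a ++ q.2 :: List.replicate (q.1.val + 1 + m) a) := by
    simp [List.replicate_add]
  have hm : (q.1.val + 1 + m) % (n - 1) = n - 2 - p.1.val := add_one_add_toNat_emod_eq hi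
  rw [postOpA, longProd_eq_twistedProd hθ, hlist, twistedProd_cons, twistedProd_append,
    twistedProd_cons, twistedProd_replicate_mod hper _ (q.1.val + 1 + m), hm]
  simp [mul_assoc, add_comm 1, add_assoc]

lemma postOpA_snd_one_one {n : ℕ} (hn : 2 ≤ n) {θ : MulAut G} (hθ : θ ^ (n - 1) = 1)
    (p q : ZMod (n - 1) × G) : (postOpA n θ 1 1 p q).2 = p.2 * (θ ^ (p.1.val + 1)) q.2 := by
  simpa using postOpA_snd_self hn hθ (twistedProd_replicate_one θ · (n - 1)) p q

lemma eq_of_longProd_cons_replicate {n : ℕ} {θ : MulAut G} (hθ : θ ^ (n - 1) = 1) {u ubar : G}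
    (hper : twistedProd θ 1 (List.replicate (n - 1) u) = 1)
    (hubar : longProd n θ (ubar :: List.replicate (n - 1) u) = u) : ubar = u := by
  simpa [longProd_eq_twistedProd hθ, hper] using hubar

end PostCover

open PostCover in
/-- Let `(G,f) = der_θ(G,·)` with `θ^{n-1} = id`, let `Λ ∈ Aut(G,f)` and `u = Λ(e)`
(with skew element `ū`).  Then `Λ*_e(i,x) = (i, Λ(x))` is a group isomorphism from
the Post cover `G*_e` to the Post cover `G*_u`. -/
theorem post_cover_base_change_iso {G : Type*} [Group G] (n : ℕ) (hn : 2 ≤ n)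
    (θ : MulAut G) (hθ : θ ^ (n - 1) = 1)
    (Λ : G → G) (hbij : Function.Bijective Λ)
    (hhom : ∀ x : Fin n → G, Λ (derF n θ x) = derF n θ (fun i => Λ (x i)))
    (u : G) (hu : u = Λ 1)
    (ubar : G) (hubar : longProd n θ (ubar :: List.replicate (n - 1) u) = u) :
    Function.Bijective (fun p : ZMod (n - 1) × G => (p.1, Λ p.2)) ∧
      ∀ p q : ZMod (n - 1) × G,
        ((postOpA n θ 1 1 p q).1, Λ (postOpA n θ 1 1 p q).2) =
          postOpA n θ u ubar (p.1, Λ p.2) (q.1, Λ q.2) := by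
  have hΛ : IsDerEndo n θ Λ := hhom
  subst hu
  have hper₁ := hΛ.twistedProd_replicate_map_one (by omega)
  obtain rfl := eq_of_longProd_cons_replicate hθ hper₁ hubar
  refine ⟨Function.bijective_id.prodMap hbij, fun p q => Prod.ext rfl ?_⟩
  rw [postOpA_snd_one_one hn hθ, postOpA_snd_self hn hθ (twistedProd_eq_one_of_period hper₁),
    hΛ.map_mul_pow_succ_apply (val_add_two_le hn p.1)]
end

section
/- Let (G,f) = der_θ(G,·) with θ^{n-1} = id, and let u ∈ G be an idempotent of (G,f). Define δ(i,u) = θ(u)·θ²(u)···θ^i(u) for i ∈ ℤ_{n-1} (with δ(0,u) = e). Then the map q_u : G*_u → G*_e given by q_u(i,x) = (i, x·δ(i,u)) is a group isomorphism of Post covers. -/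
/-- `δ(i,u) = θ(u)·θ²(u)⋯θ^i(u)`, with `δ(0,u) = e`. -/
def delta {G : Type*} [Group G] (θ : MulAut G) (k : ℕ) (u : G) : G :=
  (List.ofFn fun t : Fin k => (θ ^ ((t : ℕ) + 1)) u).prod

/-!
Since `θ^(n-1) = 1`, `f_*` of a long word is the twisted product `∏ θ^t(L_t)`, and a block
`x, u, …, u` (`i` copies of `u`) starting at position `s` contributes `θ^s(x·δ(i,u))`.
Idempotency of `u` reads `u·δ(n-1,u) = u`, i.e. `δ(n-1,u) = 1`; hence `δ(·,u)` is
`(n-1)`-periodic and `θ^a(δ(b,u))·δ(a,u) = 1` whenever `n-1 ∣ a+b`, as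
`δ(a+b,u) = δ(a,u)·θ^a(δ(b,u))`. In the product of `G*_u` the trailing block `u, …, u`
therefore cancels the correction `δ(i+j+1,u)` applied by `q_u`, and what remains is the product
of `G*_e` of the images.
-/

section TwistedProduct

variable {G : Type*} [Group G] (θ : MulAut G)

def twistedProd (s : ℕ) (L : List G) : G :=
  ((L.zipIdx s).map fun p => (θ ^ p.2) p.1).prod

@[simp]
lemma twistedProd_nil (s : ℕ) : twistedProd θ s [] = 1 := rfl

lemma twistedProd_cons (s : ℕ) (x : G) (L : List G) :
    twistedProd θ s (x :: L) = (θ ^ s) x * twistedProd θ (s + 1) L := by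
  simp [twistedProd, List.zipIdx_cons]

lemma twistedProd_append (s : ℕ) (L₁ L₂ : List G) :
    twistedProd θ s (L₁ ++ L₂) = twistedProd θ s L₁ * twistedProd θ (s + L₁.length) L₂ := by
  simp [twistedProd, List.zipIdx_append]

lemma longProd_eq_twistedProd {n : ℕ} (hθ : θ ^ (n - 1) = 1) (L : List G) :
    longProd n θ L = twistedProd θ 0 L := by
  simp only [longProd, twistedProd, ← pow_eq_pow_mod _ hθ]

@[simp]
lemma delta_zero (u : G) : delta θ 0 u = 1 := by
  simp [delta]

@[simp]
lemma delta_one_right (k : ℕ) : delta θ k (1 : G) = 1 := by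
  simp [delta]

lemma delta_succ (k : ℕ) (u : G) : delta θ (k + 1) u = θ (u * delta θ k u) := by
  simp [delta, List.ofFn_succ, map_list_prod, List.map_ofFn, Function.comp_def, pow_succ']

lemma twistedProd_replicate (s k : ℕ) (a : G) :
    twistedProd θ (s + 1) (List.replicate k a) = (θ ^ s) (delta θ k a) := by
  induction k generalizing s with
  | zero => simp
  | succ k ih =>
    rw [List.replicate_succ, twistedProd_cons, ih, delta_succ, ← MulAut.mul_apply, ← pow_succ,
      map_mul]

lemma delta_eq_twistedProd (k : ℕ) (u : G) :
    delta θ k u = twistedProd θ 1 (List.replicate k u) := by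
  simp [twistedProd_replicate θ 0]

lemma delta_add (a b : ℕ) (u : G) :
    delta θ (a + b) u = delta θ a u * (θ ^ a) (delta θ b u) := by
  rw [delta_eq_twistedProd θ (a + b), List.replicate_add, twistedProd_append, List.length_replicate,
    add_comm 1 a, twistedProd_replicate θ a, ← delta_eq_twistedProd]

lemma twistedProd_cons_replicate_append (s k : ℕ) (x a : G) (L : List G) :
    twistedProd θ s (x :: List.replicate k a ++ L) =
      (θ ^ s) (x * delta θ k a) * twistedProd θ (s + k + 1) L := by
  rw [twistedProd_append, twistedProd_cons, twistedProd_replicate, List.length_cons,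
    List.length_replicate, map_mul, add_assoc]

lemma twistedProd_postOpA_list (x y a : G) (i j k : ℕ) :
    twistedProd θ 0 ([x] ++ List.replicate i a ++ [y] ++ List.replicate j a ++ [a] ++
        List.replicate k a) =
      x * delta θ i a * (θ ^ (i + 1)) (y * delta θ j a) * (θ ^ (i + j + 1)) (delta θ (k + 1) a) := by
  simp only [List.append_assoc, List.singleton_append, twistedProd_cons_replicate_append]
  rw [← List.replicate_succ, twistedProd_replicate]
  simp [mul_assoc, add_right_comm]

lemma derF_const {n : ℕ} (hn : n ≠ 0) (u : G) :
    derF n θ (fun _ => u) = u * delta θ (n - 1) u := by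
  obtain ⟨m, rfl⟩ := Nat.exists_eq_succ_of_ne_zero hn
  simp [derF, delta, List.ofFn_succ]

section Periodic

variable {m : ℕ} {u : G} (hδ : delta θ m u = 1)
include hδ

lemma delta_mod (a : ℕ) : delta θ (a % m) u = delta θ a u := by
  conv_rhs => rw [← Nat.mod_add_div a m]
  induction a / m with
  | zero => simp
  | succ k ih => rw [mul_add_one, ← add_assoc, delta_add, hδ, map_one, mul_one, ih]

lemma delta_congr {a b : ℕ} (h : a ≡ b [MOD m]) : delta θ a u = delta θ b u := by
  rw [← delta_mod θ hδ a, ← delta_mod θ hδ b, h]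

lemma map_delta_mul_delta_eq_one {a b : ℕ} (h : m ∣ a + b) :
    (θ ^ a) (delta θ b u) * delta θ a u = 1 := by
  rw [mul_eq_one_comm, ← delta_add, ← delta_mod θ hδ, Nat.mod_eq_zero_of_dvd h, delta_zero]

end Periodic

end TwistedProduct

lemma ZMod.val_add_add_one_modEq {m : ℕ} [NeZero m] (i j : ZMod m) :
    (i + j + 1).val ≡ i.val + j.val + 1 [MOD m] := by
  rw [← ZMod.natCast_eq_natCast_iff]
  push_cast
  simp

lemma sub_one_dvd_add_emod_toNat (n i j : ℕ) (hn : 2 ≤ n) :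
    n - 1 ∣ i + j + 1 + ((((n : ℤ) - i - j - 3) % ((n : ℤ) - 1)).toNat + 1) := by
  have hr : 0 ≤ ((n : ℤ) - i - j - 3) % ((n : ℤ) - 1) := Int.emod_nonneg _ (by omega)
  rw [← Int.natCast_dvd_natCast]
  push_cast [Nat.cast_sub (by omega : 1 ≤ n), Int.toNat_of_nonneg hr]
  rw [Int.emod_def]
  exact Dvd.intro (1 - ((n : ℤ) - i - j - 3) / ((n : ℤ) - 1)) (by ring)

/-- Let `(G,f) = der_θ(G,·)` with `θ^{n-1} = id`, and let `u` be an idempotent of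
`(G,f)` (so its skew element is `u` itself).  Then `q_u(i,x) = (i, x·δ(i,u))` is a
group isomorphism from the Post cover `G*_u` to the Post cover `G*_e`. -/
theorem post_cover_qu_iso {G : Type*} [Group G] (n : ℕ) (hn : 2 ≤ n)
    (θ : MulAut G) (hθ : θ ^ (n - 1) = 1)
    (u : G) (hidem : derF n θ (fun _ => u) = u) :
    Function.Bijective (fun p : ZMod (n - 1) × G => (p.1, p.2 * delta θ p.1.val u)) ∧
      ∀ p q : ZMod (n - 1) × G,
        ((postOpA n θ u u p q).1,
            (postOpA n θ u u p q).2 * delta θ (postOpA n θ u u p q).1.val u) =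
          postOpA n θ 1 1 (p.1, p.2 * delta θ p.1.val u)
            (q.1, q.2 * delta θ q.1.val u) := by
  have : NeZero (n - 1) := ⟨by omega⟩
  have hδ : delta θ (n - 1) u = 1 := by
    rwa [derF_const θ (by omega), mul_eq_left] at hidem
  refine ⟨(Equiv.prodShear (Equiv.refl _)
    fun i : ZMod (n - 1) => Equiv.mulRight (delta θ i.val u)).bijective, ?_⟩
  rintro ⟨i, x⟩ ⟨j, y⟩
  refine Prod.ext rfl ?_
  simp only [postOpA, longProd_eq_twistedProd θ hθ, twistedProd_postOpA_list, delta_one_right,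
    map_one, mul_one, delta_congr θ hδ (ZMod.val_add_add_one_modEq i j)]
  rw [mul_assoc, map_delta_mul_delta_eq_one θ hδ (sub_one_dvd_add_emod_toNat n _ _ hn), mul_one]
end

section
/- Let (G,f) = der_θ(G,·) with θ^{n-1} = id, Λ₁, Λ₂ ∈ Aut(G,f), u = Λ₁(e), v = Λ₂(e), w = Λ₁(v). Then for all i ∈ ℤ_{n-1} and x ∈ G: Λ₁(Λ₂(x)·δ(i,v))·δ(i,u) = Λ₁(Λ₂(x))·δ(i,w), where δ(i,u) = θ(u)···θ^i(u). Consequently (Λ₁∘Λ₂)* = Λ₁* ∘ Λ₂*. -/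
/-- `Λ` is an automorphism of the `n`-ary group `(G,f) = der_θ(G,·)`. -/
def IsPolyAut {G : Type*} [Group G] (n : ℕ) (θ : MulAut G) (Λ : G → G) : Prop :=
  Function.Bijective Λ ∧ ∀ x : Fin n → G, Λ (derF n θ x) = derF n θ (fun i => Λ (x i))

/-- For `Λ ∈ Aut(G,f)` with `u = Λ(e)`, `Λ*(i,x) = (i, Λ(x)·δ(i,u))`. -/
def starAut {G : Type*} [Group G] (n : ℕ) (θ : MulAut G) (Λ : G → G)
    (p : ZMod (n - 1) × G) : ZMod (n - 1) × G :=
  (p.1, Λ p.2 * delta θ p.1.val (Λ 1))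

section Helpers
variable {G : Type*} [Group G]

private def Q (c : ℕ → G) (m : ℕ) : G := ((List.range m).map c).prod

private lemma Q_succ (c : ℕ → G) (m : ℕ) :
    Q c (m + 1) = c 0 * Q (fun t => c (t + 1)) m := by
  simp [Q, List.range_succ_eq_map, List.map_map, Function.comp_def, Nat.add_comm]

private lemma Q_add (c : ℕ → G) (a b : ℕ) :
    Q c (a + b) = Q c a * Q (fun t => c (a + t)) b := by
  simp [Q, List.range_add, List.map_map, Function.comp_def]

private lemma Q_congr {c d : ℕ → G} {m : ℕ} (h : ∀ t < m, c t = d t) :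
    Q c m = Q d m := by
  unfold Q
  congr 1
  exact List.map_congr_left (fun a ha => h a (List.mem_range.mp ha))

private lemma ofFn_prod (c : ℕ → G) (m : ℕ) :
    (List.ofFn fun j : Fin m => c j).prod = Q c m := by
  induction m with
  | zero => simp [Q]
  | succ m ih =>
      rw [List.ofFn_succ']
      simp only [List.concat_eq_append, List.prod_append, List.prod_cons, List.prod_nil,
        Fin.coe_castSucc, Fin.val_last, mul_one]
      rw [ih]
      simp [Q, List.range_succ]

private lemma delta_eq_Q (θ : MulAut G) (k : ℕ) (u : G) :
    delta θ k u = Q (fun t => (θ ^ (t + 1)) u) k :=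
  ofFn_prod (fun t => (θ ^ (t + 1)) u) k

/-- Value of `derF` on the argument vector `(z₀, z₁, …, z₁, z₂, …, z₂)`
with `k` copies of `z₁`. -/
private lemma derF_indicator (n : ℕ) (θ : MulAut G) {k : ℕ} (hk : k < n - 1)
    (hn : 2 ≤ n) (z₀ z₁ z₂ : G) :
    derF n θ (fun j : Fin n => if (j : ℕ) = 0 then z₀ else if (j : ℕ) ≤ k then z₁ else z₂) =
      z₀ * delta θ k z₁ * Q (fun t => (θ ^ (k + 1 + t)) z₂) (n - 1 - k) := by
  set c : ℕ → G := fun j => (θ ^ j) (if j = 0 then z₀ else if j ≤ k then z₁ else z₂) with hc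
  have h0 : derF n θ
      (fun j : Fin n => if (j : ℕ) = 0 then z₀ else if (j : ℕ) ≤ k then z₁ else z₂) =
      Q c n := ofFn_prod c n
  rw [h0]
  have hnsplit : n = (k + 1) + (n - 1 - k) := by omega
  conv_lhs => rw [hnsplit]
  rw [Q_add, Q_succ]
  have hc0 : c 0 = z₀ := by simp [hc]
  have hmid : Q (fun t => c (t + 1)) k = delta θ k z₁ := by
    rw [delta_eq_Q]
    refine Q_congr fun t ht => ?_
    simp only [hc]
    rw [if_neg (by omega), if_pos (by omega)]
  have htail : Q (fun t => c (k + 1 + t)) (n - 1 - k) =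
      Q (fun t => (θ ^ (k + 1 + t)) z₂) (n - 1 - k) := by
    refine Q_congr fun t ht => ?_
    simp only [hc]
    rw [if_neg (by omega), if_neg (by omega)]
  rw [hc0, hmid, htail, mul_assoc]

/-- The key identity: `Λ(y·δ(k,v))·δ(k,Λ(1)) = Λ(y)·δ(k,Λ(v))`. -/
private lemma key (n : ℕ) (hn : 2 ≤ n) (θ : MulAut G)
    (Λ : G → G) (h : IsPolyAut n θ Λ) (v : G) {k : ℕ} (hk : k < n - 1) (y : G) :
    Λ (y * delta θ k v) * delta θ k (Λ 1) = Λ y * delta θ k (Λ v) := by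
  -- `θ(u)·θ²(u)⋯θ^{n-1}(u) = 1` where `u = Λ 1`
  have hX : Q (fun t => (θ ^ (t + 1)) (Λ 1)) (n - 1) = 1 := by
    have hones : derF n θ (fun _ : Fin n => (1 : G)) = 1 := by simp [derF]
    have h1 := h.2 (fun _ : Fin n => (1 : G))
    rw [hones] at h1
    have h2 : derF n θ (fun _ : Fin n => Λ 1) = Q (fun t => (θ ^ t) (Λ 1)) n :=
      ofFn_prod (fun t => (θ ^ t) (Λ 1)) n
    rw [h2, show n = (n - 1) + 1 by omega, Q_succ] at h1
    simp only [pow_zero, MulAut.one_apply] at h1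
    have := mul_left_cancel (a := Λ 1) (b := Q (fun t => (θ ^ (t + 1)) (Λ 1)) (n - 1))
      (c := 1) (by rw [mul_one]; exact h1.symm)
    exact this
  -- hence the tail product is the inverse of `δ(k, Λ 1)`
  have hT : delta θ k (Λ 1) * Q (fun t => (θ ^ (k + 1 + t)) (Λ 1)) (n - 1 - k) = 1 := by
    have e2 : Q (fun t => (θ ^ (k + 1 + t)) (Λ 1)) (n - 1 - k)
        = Q (fun t => (θ ^ (k + t + 1)) (Λ 1)) (n - 1 - k) :=
      Q_congr fun t ht => by rw [show k + 1 + t = k + t + 1 by omega]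
    rw [delta_eq_Q, e2, ← Q_add, show k + (n - 1 - k) = n - 1 by omega]
    exact hX
  -- apply the automorphism property to the indicator vector
  have hg := h.2 (fun j : Fin n => if (j : ℕ) = 0 then y else if (j : ℕ) ≤ k then v else 1)
  have hL : derF n θ
      (fun j : Fin n => if (j : ℕ) = 0 then y else if (j : ℕ) ≤ k then v else 1) =
      y * delta θ k v := by
    rw [derF_indicator n θ hk hn y v 1]
    have : Q (fun t => (θ ^ (k + 1 + t)) (1 : G)) (n - 1 - k) = 1 := by simp [Q]
    rw [this, mul_one]
  have hcomp : (fun j : Fin n =>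
      Λ (if (j : ℕ) = 0 then y else if (j : ℕ) ≤ k then v else 1)) =
      fun j : Fin n => if (j : ℕ) = 0 then Λ y else if (j : ℕ) ≤ k then Λ v else Λ 1 := by
    funext j
    split_ifs <;> rfl
  rw [hL, hcomp, derF_indicator n θ hk hn (Λ y) (Λ v) (Λ 1)] at hg
  have hTinv : Q (fun t => (θ ^ (k + 1 + t)) (Λ 1)) (n - 1 - k) = (delta θ k (Λ 1))⁻¹ :=
    eq_inv_of_mul_eq_one_right hT
  rw [hg, hTinv]
  group

end Helpers

/-- Let `(G,f) = der_θ(G,·)` with `θ^{n-1} = id`, `Λ₁, Λ₂ ∈ Aut(G,f)`, `u = Λ₁(e)`,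
`v = Λ₂(e)`, `w = Λ₁(v)`.  Then `Λ₁(Λ₂(x)·δ(i,v))·δ(i,u) = Λ₁(Λ₂(x))·δ(i,w)` for
all `i ∈ ℤ_{n-1}`, `x ∈ G`; consequently `(Λ₁∘Λ₂)* = Λ₁* ∘ Λ₂*`. -/
theorem star_multiplicative {G : Type*} [Group G] (n : ℕ) (hn : 2 ≤ n)
    (θ : MulAut G) (hθ : θ ^ (n - 1) = 1)
    (Λ₁ Λ₂ : G → G) (h₁ : IsPolyAut n θ Λ₁) (h₂ : IsPolyAut n θ Λ₂)
    (u v w : G) (hu : u = Λ₁ 1) (hv : v = Λ₂ 1) (hw : w = Λ₁ v) :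
    (∀ (i : ZMod (n - 1)) (x : G),
        Λ₁ (Λ₂ x * delta θ i.val v) * delta θ i.val u =
          Λ₁ (Λ₂ x) * delta θ i.val w) ∧
      starAut n θ (Λ₁ ∘ Λ₂) = starAut n θ Λ₁ ∘ starAut n θ Λ₂ := by
  haveI : NeZero (n - 1) := ⟨by omega⟩
  subst hu hv hw
  have hmain : ∀ (i : ZMod (n - 1)) (x : G),
      Λ₁ (Λ₂ x * delta θ i.val (Λ₂ 1)) * delta θ i.val (Λ₁ 1) =
        Λ₁ (Λ₂ x) * delta θ i.val (Λ₁ (Λ₂ 1)) := by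
    intro i x
    exact key n hn θ Λ₁ h₁ (Λ₂ 1) (ZMod.val_lt i) (Λ₂ x)
  refine ⟨hmain, ?_⟩
  funext p
  simp only [starAut, Function.comp_apply]
  exact Prod.ext rfl (hmain p.1 p.2).symm
end

section
/- Let (G,·) be a group, θ ∈ Aut(G) with θ^{n-1} = id, and (G,f) = der_θ(G,·). If u ∈ G is an idempotent of (G,f) and φ ∈ Aut(G,·) satisfies φθφ⁻¹θ⁻¹ = I_u, then Λ = R_u ∘ φ (where R_u(x) = x·u) is an automorphism of the n-ary group (G,f). -/
/-- Let `(G,f) = der_θ(G,·)` with `θ^{n-1} = id`.  If `u` is an idempotent of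
`(G,f)` and `φ ∈ Aut(G,·)` satisfies `φθφ⁻¹θ⁻¹ = I_u`, then `Λ = R_u ∘ φ`
(`Λ(x) = φ(x)·u`) is an automorphism of the `n`-ary group `(G,f)`. -/
theorem Ru_phi_is_polyadic_aut {G : Type*} [Group G] (n : ℕ) (hn : 2 ≤ n)
    (θ : MulAut G) (hθ : θ ^ (n - 1) = 1)
    (u : G) (hidem : derF n θ (fun _ => u) = u)
    (φ : MulAut G) (hc : φ * θ * φ⁻¹ * θ⁻¹ = MulAut.conj u) :
    Function.Bijective (fun x : G => φ x * u) ∧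
      ∀ x : Fin n → G,
        φ (derF n θ x) * u = derF n θ (fun i => φ (x i) * u) := by
  have key : ∀ y : G, u * θ (φ y) = φ (θ y) * u := by
    intro y
    have h := congrArg (fun ψ : MulAut G => ψ (θ (φ y))) hc
    simp only [MulAut.mul_apply, MulAut.inv_apply_self, MulAut.apply_inv_self,
      MulAut.conj_apply] at h
    rw [h]
    group
  set w : ℕ → G := fun k => (List.ofFn fun i : Fin k => (θ ^ (i : ℕ)) u).prod with hw
  have hwsucc : ∀ k, w (k + 1) = w k * (θ ^ k) u := by
    intro k
    show (List.ofFn fun i : Fin (k + 1) => (θ ^ (i : ℕ)) u).prod =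
      (List.ofFn fun i : Fin k => (θ ^ (i : ℕ)) u).prod * (θ ^ k) u
    rw [List.ofFn_succ' (fun i : Fin (k + 1) => (θ ^ (i : ℕ)) u)]
    simp [List.concat_eq_append]
  have lemA : ∀ (k : ℕ) (y : G), w k * (θ ^ k) (φ y) = φ ((θ ^ k) y) * w k := by
    intro k
    induction k with
    | zero => intro y; simp [hw]
    | succ k ih =>
      intro y
      have e1 : (θ ^ (k + 1)) (φ y) = (θ ^ k) (θ (φ y)) := by
        rw [pow_succ]; rfl
      have e2 : (θ ^ (k + 1)) y = (θ ^ k) (θ y) := by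
        rw [pow_succ]; rfl
      rw [hwsucc, e1, e2, mul_assoc, ← map_mul, key, map_mul, ← mul_assoc, ih,
        mul_assoc]
  have lemB : ∀ (k : ℕ) (x : Fin k → G),
      (List.ofFn fun i : Fin k => (θ ^ (i : ℕ)) (φ (x i) * u)).prod =
        φ (List.ofFn fun i : Fin k => (θ ^ (i : ℕ)) (x i)).prod * w k := by
    intro k
    induction k with
    | zero => intro x; simp [hw]
    | succ k ih =>
      intro x
      rw [List.ofFn_succ' (fun i : Fin (k + 1) => (θ ^ (i : ℕ)) (φ (x i) * u)),
        List.ofFn_succ' (fun i : Fin (k + 1) => (θ ^ (i : ℕ)) (x i))]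
      simp only [List.concat_eq_append, List.prod_append, List.prod_cons,
        List.prod_nil, mul_one, Fin.coe_castSucc, Fin.val_last]
      rw [ih (fun i => x i.castSucc), map_mul, hwsucc]
      calc φ (List.ofFn fun i : Fin k => (θ ^ (i : ℕ)) (x i.castSucc)).prod * w k *
            ((θ ^ k) (φ (x (Fin.last k))) * (θ ^ k) u)
          = φ (List.ofFn fun i : Fin k => (θ ^ (i : ℕ)) (x i.castSucc)).prod *
            (w k * (θ ^ k) (φ (x (Fin.last k)))) * (θ ^ k) u := by
            rw [mul_assoc, mul_assoc, mul_assoc]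
        _ = φ (List.ofFn fun i : Fin k => (θ ^ (i : ℕ)) (x i.castSucc)).prod *
            (φ ((θ ^ k) (x (Fin.last k))) * w k) * (θ ^ k) u := by rw [lemA]
        _ = φ ((List.ofFn fun i : Fin k => (θ ^ (i : ℕ)) (x i.castSucc)).prod *
            (θ ^ k) (x (Fin.last k))) * (w k * (θ ^ k) u) := by
            rw [map_mul]; group
  have hwn : w n = u := by
    have : derF n θ (fun _ => u) = w n := rfl
    rw [← this, hidem]
  constructor
  · exact ⟨fun a b h => φ.injective (mul_right_cancel h),
      fun y => ⟨φ.symm (y * u⁻¹), by simp⟩⟩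
  · intro x
    have := lemB n x
    rw [derF, derF, this, hwn]
end

section
/- Let Ĝ = A ⋉ G where A = ⟨a⟩ is cyclic of order n-1 acting on G, and let θ(x) = axa⁻¹ (conjugation inside Ĝ, restricted to G). Suppose φ ∈ Aut(G) and u ∈ G satisfy (au)^{n-1} = 1 (in Ĝ) and φθφ⁻¹θ⁻¹ = I_u. Then the map (aⁱ, x) ↦ (aⁱ, u⁻¹·φ(x)·u·(au)ⁱ·a⁻ⁱ) is an automorphism of Ĝ. -/
/-- `k`-th power in `Ĝ`. -/
def sdPow {G : Type*} [Group G] (n : ℕ) (θ : MulAut G) (k : ℕ)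
    (p : ZMod (n - 1) × G) : ZMod (n - 1) × G :=
  (List.replicate k p).foldl (sdMul n θ) ((0 : ZMod (n - 1)), (1 : G))

/-- Inverse in `Ĝ`. -/
def sdInv {G : Type*} [Group G] (n : ℕ) (θ : MulAut G) (p : ZMod (n - 1) × G) :
    ZMod (n - 1) × G :=
  (-p.1, (θ ^ (-p.1).val) p.2⁻¹)

/-- The generator `a` of `A ≤ Ĝ`, as the element `(a, e)` of `Ĝ`. -/
def aGen {G : Type*} [Group G] (n : ℕ) : ZMod (n - 1) × G :=
  ((1 : ZMod (n - 1)), (1 : G))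

/-- The map `β_{φ,u} : (aⁱ,x) ↦ (aⁱ, u⁻¹·φ(x)·u·(au)ⁱ·a⁻ⁱ)`, where the products
`(au)ⁱ·a⁻ⁱ` are computed in `Ĝ` (they lie in `G`). -/
def betaMap {G : Type*} [Group G] (n : ℕ) (θ : MulAut G) (φ : MulAut G) (u : G)
    (p : ZMod (n - 1) × G) : ZMod (n - 1) × G :=
  (p.1, u⁻¹ * φ p.2 * u *
    (sdMul n θ (sdPow n θ p.1.val (sdMul n θ (aGen n) ((0 : ZMod (n - 1)), u)))
        (sdInv n θ (sdPow n θ p.1.val (aGen n)))).2)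

/-- The twisted cocycle `U k = u · θ(u) · θ²(u) ⋯ θ^{k-1}(u)`. -/
def Ucoc {G : Type*} [Group G] (θ : MulAut G) (u : G) : ℕ → G
  | 0 => 1
  | k + 1 => Ucoc θ u k * (θ ^ k) u

lemma sdPow_succ {G : Type*} [Group G] (n : ℕ) (θ : MulAut G) (k : ℕ)
    (p : ZMod (n - 1) × G) :
    sdPow n θ (k + 1) p = sdMul n θ (sdPow n θ k p) p := by
  simp [sdPow, List.replicate_succ', List.foldl_append]

/-- Let `Ĝ = A ⋉ G`, `A = ⟨a⟩` cyclic of order `n-1`, `θ(x) = axa⁻¹`.  If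
`φ ∈ Aut(G)` and `u ∈ G` satisfy `(au)^{n-1} = 1` in `Ĝ` and `φθφ⁻¹θ⁻¹ = I_u`,
then `(aⁱ,x) ↦ (aⁱ, u⁻¹·φ(x)·u·(au)ⁱ·a⁻ⁱ)` is an automorphism of `Ĝ`. -/
theorem betaMap_is_aut {G : Type*} [Group G] (n : ℕ) (hn : 2 ≤ n)
    (θ : MulAut G) (hθ : θ ^ (n - 1) = 1)
    (φ : MulAut G) (u : G)
    (hpow : sdPow n θ (n - 1) (sdMul n θ (aGen n) ((0 : ZMod (n - 1)), u)) =
      ((0 : ZMod (n - 1)), (1 : G)))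
    (hc : φ * θ * φ⁻¹ * θ⁻¹ = MulAut.conj u) :
    Function.Bijective (betaMap n θ φ u) ∧
      ∀ p q : ZMod (n - 1) × G,
        betaMap n θ φ u (sdMul n θ p q) =
          sdMul n θ (betaMap n θ φ u p) (betaMap n θ φ u q) := by
  haveI : NeZero (n - 1) := ⟨by omega⟩
  -- θ raised to a `val` equals θ raised to the original natural number
  have hθval : ∀ (k : ℕ) (y : G), (θ ^ ((k : ZMod (n - 1)).val)) y = (θ ^ k) y := by
    intro k y
    rw [ZMod.val_natCast]
    conv_rhs => rw [← Nat.div_add_mod k (n - 1)]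
    rw [pow_add, pow_mul, hθ, one_pow, one_mul]
  have hθ1 : ∀ y : G, (θ ^ ((1 : ZMod (n - 1)).val)) y = θ y := by
    intro y
    simpa using hθval 1 y
  have hU1 : ∀ k, Ucoc θ u (k + 1) = Ucoc θ u k * (θ ^ k) u := fun _ => rfl
  have hadd : ∀ a b, Ucoc θ u (a + b) = Ucoc θ u a * (θ ^ a) (Ucoc θ u b) := by
    intro a b
    induction b with
    | zero => simp [Ucoc]
    | succ b ih =>
      rw [← Nat.add_assoc, hU1, ih, hU1, map_mul, mul_assoc]
      congr 1
      rw [pow_add, MulAut.mul_apply]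
  have hU1' : ∀ k, Ucoc θ u (k + 1) = u * θ (Ucoc θ u k) := by
    intro k
    have h := hadd 1 k
    simpa [Ucoc, Nat.add_comm] using h
  have hswap : ∀ k, u * θ (Ucoc θ u k) = Ucoc θ u k * (θ ^ k) u := by
    intro k
    rw [← hU1', hU1]
  -- power of aGen
  have hA : ∀ k : ℕ, sdPow n θ k (aGen n) = ((k : ZMod (n - 1)), 1) := by
    intro k
    induction k with
    | zero => simp [sdPow]
    | succ k ih =>
      rw [sdPow_succ, ih]
      simp [sdMul, aGen]
  -- power of (a,θ u)
  have hAU : ∀ k : ℕ,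
      sdPow n θ k (sdMul n θ (aGen n) ((0 : ZMod (n - 1)), u)) =
        ((k : ZMod (n - 1)), θ (Ucoc θ u k)) := by
    intro k
    induction k with
    | zero => simp [sdPow, Ucoc]
    | succ k ih =>
      rw [sdPow_succ, ih]
      simp only [sdMul, aGen, one_mul]
      refine Prod.ext ?_ ?_
      · simp
      · show θ (Ucoc θ u k) * (θ ^ ((k : ZMod (n-1)).val)) ((θ ^ ((1 : ZMod (n-1)).val)) u)
            = θ (Ucoc θ u (k + 1))
        rw [hθ1, hθval, hU1, map_mul]
        congr 1
        rw [← MulAut.mul_apply, ← pow_succ, pow_succ', MulAut.mul_apply]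
  -- normal form of betaMap
  have hbeta : ∀ p : ZMod (n - 1) × G,
      betaMap n θ φ u p = (p.1, u⁻¹ * φ p.2 * u * θ (Ucoc θ u p.1.val)) := by
    intro p
    unfold betaMap
    rw [hAU, hA]
    simp [sdMul, sdInv]
  -- consequences of hpow
  have hUn : Ucoc θ u (n - 1) = 1 := by
    have h := hpow
    rw [hAU] at h
    have h2 : θ (Ucoc θ u (n - 1)) = 1 := congrArg Prod.snd h
    exact θ.injective (by simp [h2])
  have hUmul : ∀ q : ℕ, Ucoc θ u ((n - 1) * q) = 1 := by
    intro q
    induction q with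
    | zero => simp [Ucoc]
    | succ q ih =>
      rw [Nat.mul_succ, hadd, ih, hUn, map_one, one_mul]
  have hmod : ∀ a, Ucoc θ u a = Ucoc θ u (a % (n - 1)) := by
    intro a
    conv_lhs => rw [← Nat.div_add_mod a (n - 1)]
    rw [hadd, hUmul, one_mul, pow_mul, hθ, one_pow]
    rfl
  have hcong : ∀ a b, a % (n - 1) = b % (n - 1) → Ucoc θ u a = Ucoc θ u b := by
    intro a b h
    rw [hmod a, hmod b, h]
  -- the commutation relation pointwise
  have hcθ : ∀ y : G, φ (θ y) = u * θ (φ y) * u⁻¹ := by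
    intro y
    have h := DFunLike.congr_fun hc (θ (φ y))
    simpa [MulAut.conj_apply, MulAut.mul_apply, MulAut.inv_apply_self,
      MulAut.apply_inv_self, mul_assoc] using h
  have hconj : ∀ (k : ℕ) (y : G),
      φ ((θ ^ k) y) = Ucoc θ u k * (θ ^ k) (φ y) * (Ucoc θ u k)⁻¹ := by
    intro k
    induction k with
    | zero => simp [Ucoc]
    | succ k ih =>
      intro y
      rw [pow_succ, MulAut.mul_apply, MulAut.mul_apply, ih, hcθ, hU1]
      simp [map_mul, mul_assoc]
  refine ⟨?_, ?_⟩
  · refine Function.bijective_iff_has_inverse.mpr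
      ⟨fun p => (p.1, φ⁻¹ (u * (p.2 * (θ (Ucoc θ u p.1.val))⁻¹) * u⁻¹)), ?_, ?_⟩
    · intro p
      rw [hbeta]
      refine Prod.ext rfl ?_
      show φ⁻¹ (u * ((u⁻¹ * φ p.2 * u * θ (Ucoc θ u p.1.val)) *
          (θ (Ucoc θ u p.1.val))⁻¹) * u⁻¹) = p.2
      have : u * ((u⁻¹ * φ p.2 * u * θ (Ucoc θ u p.1.val)) *
          (θ (Ucoc θ u p.1.val))⁻¹) * u⁻¹ = φ p.2 := by group
      rw [this]
      simp
    · intro p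
      rw [hbeta]
      refine Prod.ext rfl ?_
      show u⁻¹ * φ (φ⁻¹ (u * (p.2 * (θ (Ucoc θ u p.1.val))⁻¹) * u⁻¹)) * u *
          θ (Ucoc θ u p.1.val) = p.2
      rw [MulAut.apply_inv_self]
      group
  · intro p q
    rw [hbeta, hbeta, hbeta]
    simp only [sdMul]
    refine Prod.ext rfl ?_
    show u⁻¹ * φ (p.2 * (θ ^ p.1.val) q.2) * u * θ (Ucoc θ u ((p.1 + q.1).val)) =
      (u⁻¹ * φ p.2 * u * θ (Ucoc θ u p.1.val)) *
        (θ ^ p.1.val) (u⁻¹ * φ q.2 * u * θ (Ucoc θ u q.1.val))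
    have hcval : ((p.1 + q.1).val + 1) % (n - 1) =
        (p.1.val + (q.1.val + 1)) % (n - 1) := by
      rw [ZMod.val_add, Nat.mod_add_mod, Nat.add_assoc]
    have hkey : u * θ (Ucoc θ u ((p.1 + q.1).val)) =
        Ucoc θ u p.1.val * ((θ ^ p.1.val) u *
          (θ ^ p.1.val) (θ (Ucoc θ u q.1.val))) := by
      rw [← hU1', hcong _ _ hcval, hadd, hU1', map_mul]
    have hswap' : ∀ w : G, u * (θ (Ucoc θ u p.1.val) * w) =
        Ucoc θ u p.1.val * ((θ ^ p.1.val) u * w) := by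
      intro w
      rw [← mul_assoc, ← mul_assoc, hswap]
    rw [map_mul φ, hconj]
    simp only [map_mul, map_inv, mul_assoc]
    rw [hkey, hswap']
    simp [mul_assoc]
end

section
/- Let (G,·) be a group, θ ∈ Aut(G) with θ^{n-1} = id, and Λ = R_u φ with u idempotent and [φ,θ] = I_u, so Λ ∈ Aut(G,f) for (G,f) = der_θ(G,·). Then the conjugated automorphism α(Λ) := φ⁻¹ ∘ Λ* ∘ φ of ℤ_{n-1} ⋉ G, where φ(i,x) = (i-1, θ^{n-2}(x)) is the isomorphism ℤ_{n-1}⋉G ≅ G*_e composed appropriately and Λ*(i,x) = (i, Λ(x)δ(i,u)), is given explicitly by α(Λ)(i,x) = (i, u⁻¹·φ(x)·u·δ(i,u)). -/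
/-- The isomorphism `ψ : ℤ_{n-1} ⋉ G → G*_e`, `ψ(i,x) = (i-1, θ^{n-2}(x))`. -/
def psiIso {G : Type*} [Group G] (n : ℕ) (θ : MulAut G) (p : ZMod (n - 1) × G) :
    ZMod (n - 1) × G :=
  (p.1 - 1, (θ ^ (n - 2)) p.2)

/-- The inverse of `ψ`. -/
def psiInv {G : Type*} [Group G] (n : ℕ) (θ : MulAut G) (p : ZMod (n - 1) × G) :
    ZMod (n - 1) × G :=
  (p.1 + 1, (θ ^ (n - 2)).symm p.2)

/-- `Λ* (i,x) = (i, Λ(x)·δ(i,u))` for `Λ = R_u φ` (so `u = Λ(e)`). -/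
def starRu {G : Type*} [Group G] (n : ℕ) (θ φ : MulAut G) (u : G)
    (p : ZMod (n - 1) × G) : ZMod (n - 1) × G :=
  (p.1, (φ p.2 * u) * delta θ p.1.val u)

/-- Auxiliary: `u·θ(u)⋯θ^{k-1}(u)`. -/
def wprod {G : Type*} [Group G] (θ : MulAut G) (k : ℕ) (u : G) : G :=
  (List.ofFn fun t : Fin k => (θ ^ (t : ℕ)) u).prod

lemma wprod_succ' {G : Type*} [Group G] (θ : MulAut G) (k : ℕ) (u : G) :
    wprod θ (k + 1) u = u * delta θ k u := by
  simp [wprod, delta, List.ofFn_succ, pow_succ, Function.comp]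

lemma delta_eq {G : Type*} [Group G] (θ : MulAut G) (k : ℕ) (u : G) :
    delta θ k u = θ (wprod θ k u) := by
  rw [wprod, ← MulEquiv.coe_toMonoidHom, map_list_prod]
  simp [delta, List.map_ofFn, Function.comp_def, pow_succ', MulAut.mul_apply]

lemma wprod_succ {G : Type*} [Group G] (θ : MulAut G) (k : ℕ) (u : G) :
    wprod θ (k + 1) u = wprod θ k u * (θ ^ k) u := by
  rw [wprod, List.ofFn_succ']
  simp [wprod, Function.comp]

lemma phi_pow {G : Type*} [Group G] (θ φ : MulAut G) (u : G)
    (h1 : φ * θ = MulAut.conj u * θ * φ) (k : ℕ) (y : G) :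
    φ ((θ ^ k) y) = wprod θ k u * (θ ^ k) (φ y) * (wprod θ k u)⁻¹ := by
  induction k generalizing y with
  | zero => simp [wprod]
  | succ k ih =>
    have hpt : ∀ z, φ (θ z) = u * θ (φ z) * u⁻¹ := by
      intro z
      have := congrArg (fun (ψ : MulAut G) => ψ z) h1
      simpa [MulAut.mul_apply] using this
    rw [pow_succ, MulAut.mul_apply, ih (θ y), wprod_succ]
    have : (θ ^ k) (φ (θ y)) = (θ ^ k) u * (θ ^ (k+1)) (φ y) * ((θ ^ k) u)⁻¹ := by
      rw [hpt y, pow_succ, MulAut.mul_apply]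
      simp [map_mul]
    rw [this]
    group

/-- Let `(G,f) = der_θ(G,·)` with `θ^{n-1} = id` and `Λ = R_u φ ∈ Aut(G,f)` with `u`
idempotent and `[φ,θ] = I_u`.  Then the conjugated automorphism
`α(Λ) = ψ⁻¹ ∘ Λ* ∘ ψ` of `ℤ_{n-1} ⋉ G` is given explicitly by
`α(Λ)(i,x) = (i, u⁻¹·φ(x)·u·δ(i,u))`. -/
theorem alpha_explicit {G : Type*} [Group G] (n : ℕ) (hn : 2 ≤ n)
    (θ : MulAut G) (hθ : θ ^ (n - 1) = 1)
    (u : G) (hidem : derF n θ (fun _ => u) = u)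
    (φ : MulAut G) (hc : φ * θ * φ⁻¹ * θ⁻¹ = MulAut.conj u) :
    ∀ p : ZMod (n - 1) × G,
      psiInv n θ (starRu n θ φ u (psiIso n θ p)) =
        (p.1, u⁻¹ * φ p.2 * u * delta θ p.1.val u) := by
  intro p
  haveI : NeZero (n - 1) := ⟨by omega⟩
  have hk1 : n - 2 + 1 = n - 1 := by omega
  have h1 : φ * θ = MulAut.conj u * θ * φ := by rw [← hc]; group
  -- idempotency consequences
  have hidem' : wprod θ n u = u := hidem
  have hw : wprod θ (n - 1) u = 1 := by
    have h2 : wprod θ n u = wprod θ (n - 1) u * (θ ^ (n - 1)) u := by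
      conv_lhs => rw [show n = (n - 1) + 1 by omega]
      exact wprod_succ θ (n - 1) u
    rw [h2, hθ] at hidem'
    simpa using hidem'
  have hdn2 : delta θ (n - 2) u = u⁻¹ := by
    have h3 := wprod_succ' θ (n - 2) u
    rw [hk1, hw] at h3
    exact (inv_eq_of_mul_eq_one_right h3.symm).symm
  have hdn1 : delta θ (n - 1) u = 1 := by rw [delta_eq, hw, map_one]
  -- θ^{n-2} is the inverse of θ
  have hfix : ∀ z : G, θ ((θ ^ (n - 2)) z) = z := by
    intro z
    rw [← MulAut.mul_apply, ← pow_succ', hk1, hθ]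
    rfl
  have hsymm : ∀ z : G, (θ ^ (n - 2)).symm z = θ z := by
    intro z
    apply (θ ^ (n - 2)).injective
    rw [MulEquiv.apply_symm_apply]
    apply θ.injective
    rw [hfix]
  -- the index computation
  have hval : delta θ ((p.1 - 1).val + 1) u = delta θ p.1.val u := by
    by_cases h0 : p.1.val = 0
    · have ha : p.1 = 0 := (ZMod.val_eq_zero p.1).mp h0
      have hneg : (-1 : ZMod (n - 1)) = ((n - 2 : ℕ) : ZMod (n - 1)) := by
        have h4 : ((n - 2 : ℕ) : ZMod (n - 1)) = ((n - 1 : ℕ) : ZMod (n - 1)) - 1 := by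
          rw [show n - 1 = (n - 2) + 1 by omega]
          push_cast
          ring
        rw [h4, ZMod.natCast_self, zero_sub]
      have hv : (p.1 - 1).val = n - 2 := by
        rw [ha, zero_sub, hneg, ZMod.val_cast_of_lt (by omega)]
      rw [hv, hk1, hdn1, h0]
      simp [delta]
    · have hv : (p.1 - 1).val = p.1.val - 1 := by
        have hlt : p.1.val - 1 < n - 1 := lt_of_le_of_lt (Nat.sub_le _ _) p.1.val_lt
        have hp : ((p.1.val : ℕ) : ZMod (n - 1)) = p.1 := by
          simp [ZMod.natCast_val, ZMod.cast_id]
        have : p.1 - 1 = ((p.1.val - 1 : ℕ) : ZMod (n - 1)) := by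
          rw [Nat.cast_sub (by omega), hp]
          simp
        rw [this, ZMod.val_cast_of_lt hlt]
      rw [hv, show p.1.val - 1 + 1 = p.1.val by omega]
  -- the main algebraic computation
  have e1 : θ (φ ((θ ^ (n - 2)) p.2)) = u⁻¹ * φ p.2 * u := by
    rw [phi_pow θ φ u h1, map_mul, map_mul, map_inv, hfix, ← delta_eq, hdn2, inv_inv]
  have e2 : θ u * θ (delta θ (p.1 - 1).val u) = delta θ p.1.val u := by
    rw [← map_mul, ← wprod_succ', ← delta_eq, hval]
  refine Prod.ext ?_ ?_
  · show p.1 - 1 + 1 = p.1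
    ring
  · show (θ ^ (n - 2)).symm (φ ((θ ^ (n - 2)) p.2) * u * delta θ (p.1 - 1).val u)
        = u⁻¹ * φ p.2 * u * delta θ p.1.val u
    rw [hsymm]
    calc θ (φ ((θ ^ (n - 2)) p.2) * u * delta θ (p.1 - 1).val u)
        = θ (φ ((θ ^ (n - 2)) p.2)) * (θ u * θ (delta θ (p.1 - 1).val u)) := by
          rw [map_mul, map_mul, mul_assoc]
      _ = u⁻¹ * φ p.2 * u * delta θ p.1.val u := by rw [e1, e2]
end

section
/- Let (G,·) be a group with identity e, θ ∈ Aut(G) with θ^{n-1} = id, and consider the Post cover G*_e with operation (i,x) ∗ (j,y) = (i+j+1, x·θ^{i+1}(y)). Then R = {(n-2, x) : x ∈ G} is a normal subgroup of G*_e isomorphic to G via a suitable map, and the quotient G*_e / R is cyclic of order n-1. -/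
/-- Let `θ^{n-1} = id` and let `G*_e` be the Post cover of `der_θ(G,·)`.  Then
`R = {(n-2, x) : x ∈ G}` is a normal subgroup of `G*_e` isomorphic to `G` (via
`x ↦ (n-2,x)`), and the quotient `G*_e / R` is cyclic of order `n-1`: the map
`π(i,x) = i + 1` is a surjective homomorphism onto `ℤ_{n-1}` with kernel exactly
`R`. -/
theorem post_cover_normal_subgroup {G : Type*} [Group G] (n : ℕ) (hn : 2 ≤ n)
    (θ : MulAut G) (hθ : θ ^ (n - 1) = 1) :
    -- R is a subgroup:
    (∀ p q : ZMod (n - 1) × G,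
        p ∈ {p : ZMod (n - 1) × G | p.1 = (n : ZMod (n - 1)) - 2} →
        q ∈ {p : ZMod (n - 1) × G | p.1 = (n : ZMod (n - 1)) - 2} →
        postMul n θ p q ∈ {p : ZMod (n - 1) × G | p.1 = (n : ZMod (n - 1)) - 2}) ∧
    (((n : ZMod (n - 1)) - 2, (1 : G)) ∈
        {p : ZMod (n - 1) × G | p.1 = (n : ZMod (n - 1)) - 2}) ∧
    (∀ p ∈ {p : ZMod (n - 1) × G | p.1 = (n : ZMod (n - 1)) - 2},
      ∃ q ∈ {p : ZMod (n - 1) × G | p.1 = (n : ZMod (n - 1)) - 2},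
        postMul n θ p q = ((n : ZMod (n - 1)) - 2, (1 : G)) ∧
        postMul n θ q p = ((n : ZMod (n - 1)) - 2, (1 : G))) ∧
    -- R is normal:
    (∀ g h : ZMod (n - 1) × G,
      postMul n θ g h = ((n : ZMod (n - 1)) - 2, (1 : G)) →
      ∀ p ∈ {p : ZMod (n - 1) × G | p.1 = (n : ZMod (n - 1)) - 2},
        postMul n θ (postMul n θ g p) h ∈
          {p : ZMod (n - 1) × G | p.1 = (n : ZMod (n - 1)) - 2}) ∧
    -- R is isomorphic to G via x ↦ (n-2, x):
    (Set.BijOn (fun x : G => ((n : ZMod (n - 1)) - 2, x)) Set.univ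
        {p : ZMod (n - 1) × G | p.1 = (n : ZMod (n - 1)) - 2} ∧
      ∀ x y : G,
        postMul n θ ((n : ZMod (n - 1)) - 2, x) ((n : ZMod (n - 1)) - 2, y) =
          ((n : ZMod (n - 1)) - 2, x * y)) ∧
    -- the quotient G*_e / R is cyclic of order n-1:
    ((∀ p q : ZMod (n - 1) × G,
        (postMul n θ p q).1 + 1 = (p.1 + 1) + (q.1 + 1)) ∧
      Function.Surjective (fun p : ZMod (n - 1) × G => p.1 + 1) ∧
      ∀ p : ZMod (n - 1) × G,
        (p.1 + 1 = 0 ↔ p ∈ {p : ZMod (n - 1) × G | p.1 = (n : ZMod (n - 1)) - 2})) := by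

  -- basic facts
  obtain ⟨m, hm⟩ : ∃ m, n - 1 = m + 1 := ⟨n - 2, by omega⟩
  have hcast : (n : ZMod (n - 1)) - 2 = -1 := by
    have h1 : ((n - 1 : ℕ) : ZMod (n - 1)) = 0 := ZMod.natCast_self _
    have h2 : n = (n - 1) + 1 := by omega
    rw [h2]
    push_cast
    rw [h1]
    ring
  have hval : ∀ i : ZMod (n - 1), i = -1 → θ ^ (i.val + 1) = 1 := by
    intro i hi
    subst hi
    have : ((-1 : ZMod (n - 1)).val + 1) = n - 1 := by
      rw [hm]
      simp [ZMod.val_neg_one]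
    rw [this, hθ]
  rw [hcast]
  refine ⟨?_, rfl, ?_, ?_, ⟨⟨?_, ?_, ?_⟩, ?_⟩, ?_, ?_, ?_⟩
  · intro p q hp hq
    simp only [Set.mem_setOf_eq] at *
    simp [postMul, hp, hq]
  · intro p hp
    simp only [Set.mem_setOf_eq] at hp
    refine ⟨(-1, p.2⁻¹), rfl, ?_, ?_⟩ <;>
      simp [postMul, hp, hval _ hp, hval (-1 : ZMod (n-1)) rfl, Prod.ext_iff]
  · intro g h hgh p hp
    simp only [Set.mem_setOf_eq] at *
    have h1 : g.1 + h.1 + 1 = -1 := congrArg Prod.fst hgh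
    simp only [postMul]
    rw [hp]
    linear_combination (norm := ring_nf) h1
  · intro x _
    exact rfl
  · intro x _ y _ hxy
    exact (Prod.ext_iff.mp hxy).2
  · intro p hp
    exact ⟨p.2, Set.mem_univ _, by simp only [Set.mem_setOf_eq] at hp; exact Prod.ext hp.symm rfl⟩
  · intro x y
    simp [postMul, hval (-1 : ZMod (n-1)) rfl, Prod.ext_iff]
  · intro p q
    simp only [postMul]
    ring
  · intro i
    exact ⟨(i - 1, 1), by simp⟩
  · intro p
    simp only [Set.mem_setOf_eq]
    constructor
    · intro h; linear_combination h
    · intro h; rw [h]; ring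
end

section
/- Let (G,·) be a group with identity e, θ ∈ Aut(G) with θ^{n-1} = id, f(x₁,...,xₙ) = x₁θ(x₂)···θ^{n-2}(x_{n-1})xₙ, and identify G with the subset {(0,x) : x ∈ G} of the Post cover G*_e. Then for all x₁,...,xₙ ∈ G: (0,x₁) ∗ (0,x₂) ∗ ··· ∗ (0,xₙ) = (0, f(x₁,...,xₙ)), i.e., the n-fold product in G*_e of elements of G recovers the n-ary operation f. -/
/-- Identifying `G` with `{(0,x) : x ∈ G} ⊆ G*_e`, for all `x₁,…,xₙ ∈ G` the
`n`-fold product `(0,x₁) ∗ (0,x₂) ∗ ⋯ ∗ (0,xₙ)` in the Post cover equals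
`(0, f(x₁,…,xₙ))`. -/
theorem post_cover_recovers_f {G : Type*} [Group G] (n : ℕ) (hn : 2 ≤ n)
    (θ : MulAut G) (hθ : θ ^ (n - 1) = 1) (x : Fin n → G) :
    (List.ofFn fun i : Fin n => ((0 : ZMod (n - 1)), x i)).foldl (postMul n θ)
        ((n : ZMod (n - 1)) - 2, (1 : G)) =
      ((0 : ZMod (n - 1)), derF n θ x) := by
  haveI : NeZero (n - 1) := ⟨by omega⟩
  -- powers of θ only depend on the exponent mod n-1
  have hpow : ∀ a b : ℕ, ((a : ZMod (n - 1)) = (b : ZMod (n - 1))) → θ ^ a = θ ^ b := by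
    intro a b hab
    have h : a % (n - 1) = b % (n - 1) := (ZMod.natCast_eq_natCast_iff a b _).mp hab
    have key : ∀ c : ℕ, θ ^ c = θ ^ (c % (n - 1)) := by
      intro c
      conv_lhs => rw [← Nat.mod_add_div c (n - 1)]
      rw [pow_add, pow_mul, hθ, one_pow, mul_one]
    rw [key a, key b, h]
  have hn1 : (n : ZMod (n - 1)) = 1 := by
    have : n = (n - 1) + 1 := by omega
    rw [this]
    push_cast
    simp [ZMod.natCast_self]
  have key : ∀ k (hk : k ≤ n),
      (List.ofFn fun i : Fin k => ((0 : ZMod (n - 1)), x (Fin.castLE hk i))).foldl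
          (postMul n θ) ((n : ZMod (n - 1)) - 2, (1 : G))
        = ((k : ZMod (n - 1)) - 1,
           (List.ofFn fun i : Fin k => (θ ^ (i : ℕ)) (x (Fin.castLE hk i))).prod) := by
    intro k
    induction k with
    | zero =>
      intro hk
      simp [hn1]
      ring
    | succ k ih =>
      intro hk
      have hk' : k ≤ n := Nat.le_of_succ_le hk
      rw [List.ofFn_succ' (fun i : Fin (k+1) => ((0 : ZMod (n - 1)), x (Fin.castLE hk i))),
          List.concat_eq_append, List.foldl_append]
      have e1 : (List.ofFn fun i : Fin k =>
          ((0 : ZMod (n - 1)), x (Fin.castLE hk i.castSucc)))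
          = (List.ofFn fun i : Fin k => ((0 : ZMod (n - 1)), x (Fin.castLE hk' i))) := rfl
      rw [e1, ih hk']
      rw [List.ofFn_succ' (fun i : Fin (k+1) => (θ ^ (i : ℕ)) (x (Fin.castLE hk i)))]
      have e2 : (List.ofFn fun i : Fin k =>
          (θ ^ ((i.castSucc : Fin (k+1)) : ℕ)) (x (Fin.castLE hk i.castSucc)))
          = (List.ofFn fun i : Fin k => (θ ^ (i : ℕ)) (x (Fin.castLE hk' i))) := rfl
      rw [List.concat_eq_append, List.prod_append]
      simp only [List.foldl_cons, List.foldl_nil, List.prod_cons, List.prod_nil, mul_one, e2]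
      unfold postMul
      have hexp : θ ^ ((((k : ZMod (n - 1)) - 1).val) + 1) = θ ^ k := by
        apply hpow
        push_cast
        rw [ZMod.natCast_val, ZMod.cast_id]
        ring
      simp only [hexp]
      refine Prod.ext ?_ ?_
      · push_cast; ring
      · rfl
  have h := key n le_rfl
  have e3 : (List.ofFn fun i : Fin n => ((0 : ZMod (n - 1)), x (Fin.castLE le_rfl i)))
      = (List.ofFn fun i : Fin n => ((0 : ZMod (n - 1)), x i)) := rfl
  have e4 : (List.ofFn fun i : Fin n => (θ ^ (i : ℕ)) (x (Fin.castLE le_rfl i)))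
      = (List.ofFn fun i : Fin n => (θ ^ (i : ℕ)) (x i)) := rfl
  rw [e3, e4] at h
  rw [h, derF]
  congr 1
  rw [hn1]
  ring
end
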